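/- arXiv:0710.2081 — 4 statements merged into one kernel-verified Lean document; each statement's English description precedes it below -/
import Mathlib

section
/- Every element x of the semigroup Σ_n^G of ordered G-partitions of [n] satisfies x^{|G|+1} = x. -/
/-- An (unvalidated) ordered `G`-partition of `[n]`: a list of pairs (block, group label). -/
abbrev OGP (n : ℕ) (G : Type*) := List (Finset (Fin n) × G)

/-- Multiplication of ordered `G`-partitions: the pairs `(B_i ∩ C_j, h_j * g_i)` in
lexicographic order of `(i, j)`, omitting those with empty intersection. -/
def mulOGP {n : ℕ} {G : Type*} [Mul G] (P Q : OGP n G) : OGP n G :=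
  P.flatMap fun bg => Q.filterMap fun ch =>
    if (bg.1 ∩ ch.1).Nonempty then some (bg.1 ∩ ch.1, ch.2 * bg.2) else none

/-- `P` is an ordered `G`-partition of `[n]`: blocks nonempty, pairwise disjoint, union `[n]`. -/
def IsOGP {n : ℕ} {G : Type*} (P : OGP n G) : Prop :=
  (∀ p ∈ P, p.1.Nonempty) ∧ P.Pairwise (fun p q => Disjoint p.1 q.1) ∧
    P.foldr (fun p s => p.1 ∪ s) ∅ = Finset.univ

/-- `k`-th power in `Σ_n^G` (with the empty product being the identity `(([n], e))`). -/
def powOGP {n : ℕ} {G : Type*} [Monoid G] (x : OGP n G) : ℕ → OGP n G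
  | 0 => [(Finset.univ, (1 : G))]
  | k + 1 => mulOGP x (powOGP x k)

/-!
Multiplying an ordered `G`-partition `x` by a relabelling of its own blocks only meets each
block with itself, since the blocks are nonempty and pairwise disjoint. Hence `x^(k+1)` has the
blocks of `x` with every label `g` replaced by `g^(k+1)`, and `g^(|G|+1) = g` by Lagrange.
-/

theorem filterMap_inter_eq_singleton {α β γ : Type*} [DecidableEq α] {l : List (Finset α × β)}
    (hne : ∀ p ∈ l, p.1.Nonempty) (hpw : l.Pairwise fun p q => Disjoint p.1 q.1)
    {b : Finset α × β} (hb : b ∈ l) (F : Finset α × β → γ) :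
    (l.filterMap fun c => if (b.1 ∩ c.1).Nonempty then some (b.1 ∩ c.1, F c) else none) =
      [(b.1, F b)] := by
  induction l with
  | nil => simp at hb
  | cons c l ih =>
    rw [List.pairwise_cons] at hpw
    rcases List.mem_cons.1 hb with rfl | hb
    · have hrest : ∀ d ∈ l, ¬(b.1 ∩ d.1).Nonempty := fun d hd h =>
        Finset.not_disjoint_iff_nonempty_inter.2 h (hpw.1 d hd)
      simp [hne b List.mem_cons_self, List.filterMap_eq_nil_iff.2 fun d hd => if_neg (hrest d hd)]
    · have hbc : ¬(b.1 ∩ c.1).Nonempty := fun h =>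
        Finset.not_disjoint_iff_nonempty_inter.2 h (hpw.1 b hb).symm
      rw [List.filterMap_cons, if_neg hbc]
      exact ih (fun p hp => hne p (List.mem_cons_of_mem c hp)) hpw.2 hb

section OGP

variable {n : ℕ} {G : Type*}

theorem mulOGP_map_snd [Mul G] {x : OGP n G} (hne : ∀ p ∈ x, p.1.Nonempty)
    (hpw : x.Pairwise fun p q => Disjoint p.1 q.1) (f : Finset (Fin n) × G → G) :
    mulOGP x (x.map fun p => (p.1, f p)) = x.map fun p => (p.1, f p * p.2) := by
  refine (List.flatMap_congr fun b hb => ?_).trans (List.flatMap_pure_eq_map _ x)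
  rw [List.filterMap_map]
  exact filterMap_inter_eq_singleton hne hpw hb (fun c => f c * b.2)

theorem mulOGP_univ_one [MulOneClass G] {x : OGP n G} (hne : ∀ p ∈ x, p.1.Nonempty) :
    mulOGP x [(Finset.univ, 1)] = x := by
  refine (List.flatMap_congr fun b hb => ?_).trans (List.flatMap_singleton' x)
  simp [hne b hb]

theorem powOGP_succ_eq_map [Monoid G] {x : OGP n G} (hne : ∀ p ∈ x, p.1.Nonempty)
    (hpw : x.Pairwise fun p q => Disjoint p.1 q.1) (k : ℕ) :
    powOGP x (k + 1) = x.map fun p => (p.1, p.2 ^ (k + 1)) := by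
  induction k with
  | zero => simpa [powOGP] using mulOGP_univ_one hne
  | succ k ih =>
    rw [powOGP, ih, mulOGP_map_snd hne hpw]
    simp only [pow_succ]

end OGP

/-- every `x ∈ Σ_n^G` satisfies `x^{|G|+1} = x`. -/
theorem powOGP_card_add_one {n : ℕ} {G : Type*} [Group G] [Fintype G]
    (x : OGP n G) (hx : IsOGP x) :
    powOGP x (Fintype.card G + 1) = x := by
  obtain ⟨hne, hpw, -⟩ := hx
  rw [powOGP_succ_eq_map hne hpw]
  exact List.map_id'' (fun p => by rw [pow_succ, pow_card_eq_one, one_mul]) x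
end

section
/- An element of the semigroup Σ_n^G of ordered G-partitions of [n] is idempotent if and only if all of its group labels equal the identity element e of G. -/
theorem List.filterMap_eq_singleton_of_nodup {α β : Type*} {f : α → Option β} {l : List α}
    {a : α} {b : β} (hl : l.Nodup) (ha : a ∈ l) (hfa : f a = some b)
    (hf : ∀ c ∈ l, c ≠ a → f c = none) : l.filterMap f = [b] := by
  obtain ⟨s, t, rfl⟩ := List.mem_iff_append.1 ha
  have ha' : a ∉ s ∧ a ∉ t := by
    simpa using (List.nodup_cons.1 (List.nodup_middle.1 hl)).1
  refine List.filterMap_eq_cons_iff.2 ⟨s, a, t, rfl, ?_, hfa, ?_⟩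
  · exact fun c hc => hf c (by simp [hc]) (ne_of_mem_of_not_mem hc ha'.1)
  · exact List.filterMap_eq_nil_iff.2
      fun c hc => hf c (by simp [hc]) (ne_of_mem_of_not_mem hc ha'.2)

theorem List.map_eq_self_iff {α : Type*} {f : α → α} {l : List α} :
    l.map f = l ↔ ∀ a ∈ l, f a = a := by
  conv_lhs => rhs; rw [← List.map_id l]
  exact List.map_eq_map_iff

section

variable {n : ℕ} {G : Type*}

theorem nodup_of_pairwise_disjoint {x : OGP n G} (hne : ∀ p ∈ x, p.1.Nonempty)
    (hpw : x.Pairwise fun p q => Disjoint p.1 q.1) : x.Nodup :=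
  hpw.imp_of_mem fun hp _ hd => by
    rintro rfl
    exact (hne _ hp).ne_empty (disjoint_self.1 hd)

theorem mulOGP_self_eq_map [Mul G] {x : OGP n G} (hne : ∀ p ∈ x, p.1.Nonempty)
    (hpw : x.Pairwise fun p q => Disjoint p.1 q.1) :
    mulOGP x x = x.map fun p => (p.1, p.2 * p.2) := by
  have hdisj : ∀ p ∈ x, ∀ q ∈ x, p ≠ q → Disjoint p.1 q.1 :=
    @List.Pairwise.forall _ _ _ ⟨fun _ _ h => h.symm⟩ hpw
  rw [List.map_eq_flatMap]
  refine congrArg List.flatten (List.map_congr_left fun p hp => ?_)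
  refine List.filterMap_eq_singleton_of_nodup (nodup_of_pairwise_disjoint hne hpw) hp
    (by simp [hne p hp]) fun q hq hqp => ?_
  simp [Finset.not_nonempty_iff_eq_empty, ← Finset.disjoint_iff_inter_eq_empty,
    hdisj p hp q hq hqp.symm]

end

/-- an element of `Σ_n^G` is idempotent iff all its group labels are `e`. -/
theorem isIdempotent_iff_labels_one {n : ℕ} {G : Type*} [Group G]
    (x : OGP n G) (hx : IsOGP x) :
    mulOGP x x = x ↔ ∀ p ∈ x, p.2 = (1 : G) := by
  rw [mulOGP_self_eq_map hx.1 hx.2.1, List.map_eq_self_iff]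
  refine forall₂_congr fun p _ => ?_
  rw [Prod.ext_iff]
  simp only [true_and, mul_eq_right]
end

section
/- The idempotent elements of Σ_n^G form a subsemigroup which is a left regular band: every idempotent x satisfies x² = x, and for all idempotents x, y one has x·y·x = x·y. -/
open Finset

theorem List.filterMap_eq_singleton {α β : Type*} {f : α → Option β} {l : List α} {a : α}
    {b : β} (hl : l.Nodup) (ha : a ∈ l) (hfa : f a = some b)
    (hrest : ∀ c ∈ l, c ≠ a → f c = none) :
    l.filterMap f = [b] := by
  obtain ⟨s, t, rfl⟩ := List.append_of_mem ha
  obtain ⟨has, hat⟩ : a ∉ s ∧ a ∉ t := by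
    simpa [not_or] using (List.nodup_cons.1 (List.nodup_middle.1 hl)).1
  have hs : s.filterMap f = [] := List.filterMap_eq_nil_iff.2 fun c hc =>
    hrest c (by simp [hc]) (by rintro rfl; exact has hc)
  have ht : t.filterMap f = [] := List.filterMap_eq_nil_iff.2 fun c hc =>
    hrest c (by simp [hc]) (by rintro rfl; exact hat hc)
  simp [List.filterMap_append, hfa, hs, ht]

section

variable {n : ℕ} {G : Type*}

theorem mem_foldr_union {P : OGP n G} {a : Fin n} :
    a ∈ P.foldr (fun p s => p.1 ∪ s) ∅ ↔ ∃ p ∈ P, a ∈ p.1 := by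
  induction P with
  | nil => simp
  | cons q P ih => simp [ih]

section Mul

variable [Mul G]

def rowOGP (y : OGP n G) (bg : Finset (Fin n) × G) : OGP n G :=
  y.filterMap fun ch => if (bg.1 ∩ ch.1).Nonempty then some (bg.1 ∩ ch.1, ch.2 * bg.2) else none

theorem mulOGP_eq_flatMap (x y : OGP n G) : mulOGP x y = x.flatMap (rowOGP y) := rfl

theorem mem_rowOGP {y : OGP n G} {bg p : Finset (Fin n) × G} :
    p ∈ rowOGP y bg ↔ ∃ ch ∈ y, (bg.1 ∩ ch.1).Nonempty ∧ (bg.1 ∩ ch.1, ch.2 * bg.2) = p := by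
  simp [rowOGP]

theorem mem_mulOGP {x y : OGP n G} {p : Finset (Fin n) × G} :
    p ∈ mulOGP x y ↔
      ∃ bg ∈ x, ∃ ch ∈ y, (bg.1 ∩ ch.1).Nonempty ∧ (bg.1 ∩ ch.1, ch.2 * bg.2) = p := by
  simp [mulOGP_eq_flatMap, mem_rowOGP]

end Mul

namespace IsOGP

variable {x y : OGP n G}

theorem nodup (hx : IsOGP x) : x.Nodup :=
  hx.2.1.imp_of_mem fun hp _ hdisj hpq => by
    subst hpq
    exact (hx.1 _ hp).ne_empty (disjoint_self.1 hdisj)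

theorem disjoint_of_ne (hx : IsOGP x) {p q : Finset (Fin n) × G} (hp : p ∈ x) (hq : q ∈ x)
    (hpq : p ≠ q) : Disjoint p.1 q.1 :=
  @List.Pairwise.forall _ _ _ ⟨fun _ _ h => h.symm⟩ hx.2.1 _ hp _ hq hpq

theorem rowOGP_of_subset [Mul G] (hx : IsOGP x) {D : Finset (Fin n)} (hD : D.Nonempty)
    {B : Finset (Fin n) × G} (hB : B ∈ x) (hDB : D ⊆ B.1) (g : G) :
    rowOGP x (D, g) = [(D, B.2 * g)] := by
  refine List.filterMap_eq_singleton hx.nodup hB ?_ fun C hC hCB => ?_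
  · simp [inter_eq_left.2 hDB, hD]
  · have hempty : D ∩ C.1 = ∅ :=
      disjoint_iff_inter_eq_empty.1 ((hx.disjoint_of_ne hB hC hCB.symm).mono_left hDB)
    simp [hempty]

theorem mulOGP_self [Mul G] (hx : IsOGP x) : mulOGP x x = x.map fun p => (p.1, p.2 * p.2) := by
  rw [mulOGP_eq_flatMap, List.flatMap_congr fun p hp => hx.rowOGP_of_subset (hx.1 p hp) hp
    subset_rfl p.2]
  simp [List.map_eq_flatMap]

theorem mul [Mul G] (hx : IsOGP x) (hy : IsOGP y) : IsOGP (mulOGP x y) := by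
  refine ⟨fun p hp => ?_, ?_, ?_⟩
  · obtain ⟨bg, -, ch, -, hne, rfl⟩ := mem_mulOGP.1 hp
    exact hne
  · rw [mulOGP_eq_flatMap, List.pairwise_flatMap]
    refine ⟨fun bg _ => hy.2.1.filterMap _ fun c c' hd p hp q hq => ?_,
      hx.2.1.imp fun hd p hp q hq => ?_⟩
    · simp only [Option.ite_none_right_eq_some, Option.some.injEq] at hp hq
      obtain ⟨-, rfl⟩ := hp
      obtain ⟨-, rfl⟩ := hq
      exact hd.mono inter_subset_right inter_subset_right
    · obtain ⟨_, -, -, rfl⟩ := mem_rowOGP.1 hp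
      obtain ⟨_, -, -, rfl⟩ := mem_rowOGP.1 hq
      exact hd.mono inter_subset_left inter_subset_left
  · refine eq_univ_iff_forall.2 fun a => mem_foldr_union.2 ?_
    obtain ⟨bg, hbg, ha⟩ := mem_foldr_union.1 (hx.2.2 ▸ mem_univ a)
    obtain ⟨ch, hch, hb⟩ := mem_foldr_union.1 (hy.2.2 ▸ mem_univ a)
    exact ⟨_, mem_mulOGP.2 ⟨bg, hbg, ch, hch, ⟨a, mem_inter.2 ⟨ha, hb⟩⟩, rfl⟩,
      mem_inter.2 ⟨ha, hb⟩⟩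

theorem label_eq_one_of_mulOGP_self [MulOneClass G] [IsRightCancelMul G] (hx : IsOGP x)
    (hx2 : mulOGP x x = x) : ∀ p ∈ x, p.2 = 1 := by
  have hfix : ∀ p ∈ x, (p.1, p.2 * p.2) = id p :=
    List.map_eq_map_iff.1 (by rw [← hx.mulOGP_self, hx2, List.map_id])
  intro p hp
  have hsq : p.2 * p.2 = p.2 := congrArg Prod.snd (hfix p hp)
  exact mul_right_cancel (hsq.trans (one_mul p.2).symm)

theorem mulOGP_self_of_label_eq_one [MulOneClass G] (hx : IsOGP x) (hx1 : ∀ p ∈ x, p.2 = 1) :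
    mulOGP x x = x := by
  have hsq : ∀ p ∈ x, (p.1, p.2 * p.2) = p := fun p hp => Prod.ext rfl (by simp [hx1 p hp])
  rw [hx.mulOGP_self, List.map_congr_left hsq, List.map_id']

theorem mulOGP_mulOGP_left [MulOneClass G] (hx : IsOGP x) (hx1 : ∀ p ∈ x, p.2 = 1)
    (y : OGP n G) : mulOGP (mulOGP x y) x = mulOGP x y := by
  rw [mulOGP_eq_flatMap (mulOGP x y) x]
  refine (List.flatMap_congr fun p hp => ?_).trans (List.flatMap_singleton' _)
  obtain ⟨bg, hbg, ch, -, hne, rfl⟩ := mem_mulOGP.1 hp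
  rw [hx.rowOGP_of_subset hne hbg inter_subset_left, hx1 bg hbg, one_mul]

end IsOGP

theorem label_mulOGP_eq_one [MulOneClass G] {x y : OGP n G} (hx1 : ∀ p ∈ x, p.2 = 1)
    (hy1 : ∀ p ∈ y, p.2 = 1) : ∀ p ∈ mulOGP x y, p.2 = 1 := by
  intro p hp
  obtain ⟨bg, hbg, ch, hch, -, rfl⟩ := mem_mulOGP.1 hp
  simp [hx1 bg hbg, hy1 ch hch]

end

/-- the idempotents of `Σ_n^G` form a subsemigroup which is a left regular
band: products of idempotents are idempotent (in `Σ_n^G`), and `x·y·x = x·y`. -/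
theorem idempotents_leftRegularBand {n : ℕ} {G : Type*} [Group G]
    (x y : OGP n G) (hx : IsOGP x) (hy : IsOGP y)
    (hx2 : mulOGP x x = x) (hy2 : mulOGP y y = y) :
    IsOGP (mulOGP x y) ∧ mulOGP (mulOGP x y) (mulOGP x y) = mulOGP x y ∧
      mulOGP (mulOGP x y) x = mulOGP x y := by
  have hx1 := hx.label_eq_one_of_mulOGP_self hx2
  have hy1 := hy.label_eq_one_of_mulOGP_self hy2
  have hxy := hx.mul hy
  exact ⟨hxy, hxy.mulOGP_self_of_label_eq_one (label_mulOGP_eq_one hx1 hy1),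
    hx.mulOGP_mulOGP_left hx1 y⟩
end

section
/- Under the identification of the set C of singleton-block ordered G-partitions with the wreath product G≀S_n (identifying ((π_1,g_1),...,(π_n,g_n)) with ((({π_1},g_1),...,({π_n},g_n)))), left multiplication of σ_α on C satisfies σ_α · v = v * (σ_α · I) for every v ∈ G≀S_n, where I is the identity of G≀S_n and * is the group convolution in Z[G≀S_n]. In particular σ_α · I = X_α, the sum of all u ∈ G≀S_n with Co(u) ≤ α. -/
/-- The type of an ordered `G`-partition: the `G`-composition of block sizes and labels. -/
def typeOGP {n : ℕ} {G : Type*} (P : OGP n G) : List (ℕ × G) :=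
  P.map fun p => (p.1.card, p.2)

/-- `α` is a `G`-composition of `n`: a list of pairs of positive integers summing to `n`
with elements of `G`. -/
def IsGComp (n : ℕ) {G : Type*} (α : List (ℕ × G)) : Prop :=
  (∀ p ∈ α, 0 < p.1) ∧ (α.map Prod.fst).sum = n

/-- `σ_α`: the sum (in `ℤΣ_n^G`) of all ordered `G`-partitions of type `α`. -/
noncomputable def sigmaA {n : ℕ} {G : Type*} (α : List (ℕ × G)) :
    MonoidAlgebra ℤ (OGP n G) :=
  ∑ᶠ P ∈ {P : OGP n G | IsOGP P ∧ typeOGP P = α}, MonoidAlgebra.single P 1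

/-- The wreath product `G ≀ S_n`: pairs `(π, g)` with `π ∈ S_n` and `g : [n] → G`. -/
def Wreath (n : ℕ) (G : Type*) := Equiv.Perm (Fin n) × (Fin n → G)

/-- Multiplication `((π_i, g_i)) * ((τ_j, h_j)) = ((π_{τ_j}, g_{τ_j} h_j))_j`. -/
instance {n : ℕ} {G : Type*} [Group G] : Group (Wreath n G) where
  mul u v := (u.1 * v.1, fun i => u.2 (v.1 i) * v.2 i)
  one := (1, fun _ => 1)
  inv u := (u.1⁻¹, fun i => (u.2 (u.1⁻¹ i))⁻¹)
  mul_assoc a b c := by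
    refine Prod.ext (mul_assoc _ _ _) (funext fun i => ?_)
    show (fun j => a.2 (b.1 j) * b.2 j) (c.1 i) * c.2 i
        = a.2 ((b.1 * c.1) i) * (fun j => b.2 (c.1 j) * c.2 j) i
    simp [Equiv.Perm.mul_apply, mul_assoc]
  one_mul u := by
    refine Prod.ext (one_mul _) (funext fun i => ?_)
    show (fun _ => (1 : G)) (u.1 i) * u.2 i = u.2 i
    simp
  mul_one u := by
    refine Prod.ext (mul_one _) (funext fun i => ?_)
    show u.2 ((1 : Equiv.Perm (Fin n)) i) * 1 = u.2 i
    simp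
  inv_mul_cancel u := by
    refine Prod.ext (inv_mul_cancel _) (funext fun i => ?_)
    show (u.2 (u.1⁻¹ (u.1 i)))⁻¹ * u.2 i = 1
    simp

/-- The word of `u = ((π_1, g_1), …, (π_n, g_n))`: the list of pairs `(π_i, g_i)`. -/
def wordOf {n : ℕ} {G : Type*} (u : Wreath n G) : List (ℕ × G) :=
  (List.finRange n).map fun i => ((u.1 i : ℕ), u.2 i)

/-- `u` fits `α`, i.e. `Co(u) ≤ α`: the word of `u` splits into consecutive segments whose
lengths are the parts of `α`, with `π` strictly increasing and the `G`-label constant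
(equal to the corresponding color of `α`) on each segment. -/
def Fits {n : ℕ} {G : Type*} (u : Wreath n G) (α : List (ℕ × G)) : Prop :=
  ∃ ss : List (List (ℕ × G)), ss.flatten = wordOf u ∧
    List.Forall₂ (fun s p => s.length = p.1 ∧ List.Chain' (· < ·) (s.map Prod.fst) ∧
      ∀ q ∈ s, q.2 = p.2) ss α

/-- `α = Co(u)`: `α` is the finest (minimal-length) `G`-composition that `u` fits. -/
def IsCo {n : ℕ} {G : Type*} (u : Wreath n G) (α : List (ℕ × G)) : Prop :=
  IsGComp n α ∧ Fits u α ∧ ∀ β, IsGComp n β → Fits u β → α.length ≤ β.length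

/-- `X_α = Σ_{u : Co(u) ≤ α} u` in `ℤ[G ≀ S_n]`. -/
noncomputable def Xw {n : ℕ} {G : Type*} [Group G] (α : List (ℕ × G)) :
    MonoidAlgebra ℤ (Wreath n G) :=
  ∑ᶠ u ∈ {u : Wreath n G | Fits u α}, MonoidAlgebra.single u 1

/-- `Y_α = Σ_{u : Co(u) = α} u` in `ℤ[G ≀ S_n]`. -/
noncomputable def Yw {n : ℕ} {G : Type*} [Group G] (α : List (ℕ × G)) :
    MonoidAlgebra ℤ (Wreath n G) :=
  ∑ᶠ u ∈ {u : Wreath n G | IsCo u α}, MonoidAlgebra.single u 1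

instance {n : ℕ} {G : Type*} [Mul G] : Mul (OGP n G) := ⟨mulOGP⟩

/-- The identification of `G ≀ S_n` with the singleton-block ordered `G`-partitions:
`((π_1,g_1),…,(π_n,g_n)) ↦ (({π_1},g_1),…,({π_n},g_n))`. -/
def iota {n : ℕ} {G : Type*} (u : Wreath n G) : OGP n G :=
  (List.finRange n).map fun i => ({u.1 i}, u.2 i)

/-! The map sending `u` with `Co(u) ≤ α` to the ordered `G`-partition `P_u` whose blocks are the
images under `v u` of the consecutive segments of `[n]` of sizes `α`, colored by `α`, is a
bijection onto the ordered `G`-partitions of type `α`, and `P_u · ι(v) = ι(v u)`: a block `B` times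
`ι(v)` lists the singletons `{v j} ⊆ B` in increasing order of `j`, and on a segment these `j` are
the values of `u` in their order, because `u` increases there. Injectivity follows from this
identity; a preimage of `P` is obtained by sorting the sets `v⁻¹ B` and concatenating them. -/

namespace List

variable {α β γ : Type*}

theorem map_eq_map_iff_forall₂ {f : α → γ} {g : β → γ} {l : List α} {l' : List β} :
    l.map f = l'.map g ↔ Forall₂ (fun a b => f a = g b) l l' := by
  rw [← forall₂_eq_eq_eq, forall₂_map_left_iff, forall₂_map_right_iff]

theorem Forall₂.and {R S : α → β → Prop} {l : List α} {l' : List β}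
    (hR : Forall₂ R l l') (hS : Forall₂ S l l') : Forall₂ (fun a b => R a b ∧ S a b) l l' := by
  induction hR with
  | nil => exact .nil
  | cons hab _ ih =>
    obtain _ | ⟨hab', hS⟩ := hS
    exact .cons ⟨hab, hab'⟩ (ih hS)

theorem splitLengths_map (f : α → β) (sz : List ℕ) (l : List α) :
    sz.splitLengths (l.map f) = (sz.splitLengths l).map (map f) := by
  induction sz generalizing l with
  | nil => rfl
  | cons a sz ih => simp [← ih, map_take, ← map_drop]

theorem splitLengths_map_length_flatten (ss : List (List α)) :
    (ss.map length).splitLengths ss.flatten = ss := by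
  induction ss with
  | nil => rfl
  | cons s ss ih => simp [ih]

theorem forall₂_splitLengths_iff {R : List α → β → Prop} {f : β → ℕ} {l : List α} {bs : List β}
    (h : (bs.map f).sum = l.length) :
    Forall₂ R ((bs.map f).splitLengths l) bs ↔
      ∃ ss : List (List α), ss.flatten = l ∧ Forall₂ (fun s b => s.length = f b ∧ R s b) ss bs := by
  constructor
  · intro hR
    refine ⟨_, flatten_splitLengths l _ h.ge, Forall₂.and ?_ hR⟩
    exact map_eq_map_iff_forall₂.1 (map_splitLengths_length l _ h.le)
  · rintro ⟨ss, rfl, hss⟩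
    have hlen : ss.map length = bs.map f := map_eq_map_iff_forall₂.2 (hss.imp fun _ _ h => h.1)
    rw [← hlen, splitLengths_map_length_flatten]
    exact hss.imp fun _ _ h => h.2

theorem filterMap_ite_eq_map_filter (p : α → Prop) [DecidablePred p] (f : α → β) (l : List α) :
    l.filterMap (fun a => if p a then some (f a) else none) = (l.filter (fun a => p a)).map f := by
  induction l with
  | nil => rfl
  | cons a l ih => by_cases h : p a <;> simp [h, ih]

theorem filter_mem_finRange_eq {n : ℕ} {t : List (Fin n)} (ht : t.Pairwise (· < ·)) :
    (finRange n).filter (· ∈ t) = t := by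
  refine Perm.eq_of_pairwise (fun a b _ _ hab hba => (lt_asymm hab hba).elim)
    ((pairwise_lt_finRange n).filter _) ht ?_
  exact (perm_ext_iff_of_nodup ((nodup_finRange n).filter _) ht.nodup).2 fun a => by simp

theorem exists_map_finRange_eq {n : ℕ} (l : List α) (h : l.length = n) :
    ∃ g : Fin n → α, (finRange n).map g = l := by
  subst h
  exact ⟨l.get, map_get_finRange l⟩

theorem exists_perm_map_finRange_eq {n : ℕ} {l : List (Fin n)} (hl : l.Nodup)
    (h : l.length = n) : ∃ τ : Equiv.Perm (Fin n), (finRange n).map τ = l := by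
  obtain ⟨g, rfl⟩ := exists_map_finRange_eq l h
  have hg : Function.Injective g := fun a b hab =>
    inj_on_of_nodup_map hl (mem_finRange a) (mem_finRange b) hab
  exact ⟨Equiv.ofBijective g (Finite.injective_iff_bijective.1 hg), rfl⟩

theorem isChain_map_val_iff_pairwise {n : ℕ} (l : List (Fin n)) :
    (l.map Fin.val).IsChain (· < ·) ↔ l.Pairwise (· < ·) := by
  rw [isChain_map, ← isChain_iff_pairwise]
  rfl

end List

section Blocks

variable {n : ℕ} {G : Type*}

def blocksOf (α : List (ℕ × G)) (l : List (Fin n)) : OGP n G :=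
  List.zipWith (fun s p => (s.toFinset, p.2)) ((α.map Prod.fst).splitLengths l) α

@[simp]
theorem blocksOf_nil (l : List (Fin n)) : blocksOf ([] : List (ℕ × G)) l = [] := rfl

@[simp]
theorem blocksOf_cons (p : ℕ × G) (α : List (ℕ × G)) (l : List (Fin n)) :
    blocksOf (p :: α) l = ((l.take p.1).toFinset, p.2) :: blocksOf α (l.drop p.1) := by
  simp [blocksOf]

theorem blocksOf_flatten {α : List (ℕ × G)} {ss : List (List (Fin n))}
    (h : ss.map List.length = α.map Prod.fst) :
    blocksOf α ss.flatten = List.zipWith (fun s p => (s.toFinset, p.2)) ss α := by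
  rw [blocksOf, ← h, List.splitLengths_map_length_flatten]

theorem typeOGP_blocksOf {l : List (Fin n)} (hl : l.Nodup) {α : List (ℕ × G)}
    (hα : (α.map Prod.fst).sum ≤ l.length) : typeOGP (blocksOf α l) = α := by
  induction α generalizing l with
  | nil => rfl
  | cons p α ih =>
    simp only [List.map_cons, List.sum_cons] at hα
    have hcard : (l.take p.1).toFinset.card = p.1 := by
      rw [List.toFinset_card_of_nodup (hl.sublist (List.take_sublist _ _))]
      simp only [List.length_take]
      omega
    have htail := ih (hl.sublist (List.drop_sublist p.1 l)) (by simp only [List.length_drop]; omega)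
    simp only [typeOGP, blocksOf_cons, List.map_cons] at htail ⊢
    rw [hcard, htail]

theorem mem_of_mem_blocksOf {α : List (ℕ × G)} {l : List (Fin n)} {q : Finset (Fin n) × G}
    (hq : q ∈ blocksOf α l) {i : Fin n} (hi : i ∈ q.1) : i ∈ l := by
  induction α generalizing l with
  | nil => simp at hq
  | cons p α ih =>
    obtain rfl | hq := List.mem_cons.1 ((blocksOf_cons p α l) ▸ hq)
    · exact (List.take_sublist _ _).subset (List.mem_toFinset.1 hi)
    · exact (List.drop_sublist _ _).subset (ih hq)

theorem pairwise_disjoint_blocksOf {α : List (ℕ × G)} {l : List (Fin n)} (hl : l.Nodup) :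
    (blocksOf α l).Pairwise (fun p q => Disjoint p.1 q.1) := by
  induction α generalizing l with
  | nil => exact .nil
  | cons p α ih =>
    rw [blocksOf_cons, List.pairwise_cons]
    refine ⟨fun q hq => ?_, ih (hl.sublist (List.drop_sublist _ _))⟩
    rw [← List.take_append_drop p.1 l] at hl
    exact Finset.disjoint_left.2 fun _ hi hi' =>
      List.disjoint_of_nodup_append hl (List.mem_toFinset.1 hi) (mem_of_mem_blocksOf hq hi')

theorem foldr_union_blocksOf (α : List (ℕ × G)) (l : List (Fin n)) :
    (blocksOf α l).foldr (fun p s => p.1 ∪ s) ∅ = (l.take (α.map Prod.fst).sum).toFinset := by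
  induction α generalizing l with
  | nil => simp
  | cons p α ih =>
    rw [blocksOf_cons, List.foldr_cons, ih, List.map_cons, List.sum_cons, List.take_add,
      List.toFinset_append]

theorem isOGP_blocksOf {α : List (ℕ × G)} (hα : IsGComp n α) {l : List (Fin n)} (hl : l.Nodup)
    (hlen : l.length = n) : IsOGP (blocksOf α l) := by
  have htype := typeOGP_blocksOf hl (α := α) (by rw [hα.2, hlen])
  refine ⟨fun q hq => ?_, pairwise_disjoint_blocksOf hl, ?_⟩
  · have : (q.1.card, q.2) ∈ α := htype ▸ List.mem_map_of_mem hq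
    exact Finset.card_pos.1 (hα.1 _ this)
  · rw [foldr_union_blocksOf, hα.2, List.take_of_length_le hlen.le]
    exact Finset.eq_univ_of_card _ (by rw [List.toFinset_card_of_nodup hl, hlen, Fintype.card_fin])

theorem iota_injective : Function.Injective (iota : Wreath n G → OGP n G) := by
  intro u u' h
  have h' : ∀ i, ({u.1 i}, u.2 i) = (({u'.1 i} : Finset (Fin n)), u'.2 i) := fun i =>
    List.map_inj_left.1 h i (List.mem_finRange i)
  simp only [Prod.mk.injEq, Finset.singleton_inj] at h'
  exact Prod.ext (Equiv.ext fun i => (h' i).1) (funext fun i => (h' i).2)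

def FitsOn (u : Wreath n G) (α : List (ℕ × G)) (l : List (Fin n)) : Prop :=
  List.Forall₂ (fun t p => (t.map u.1).Pairwise (· < ·) ∧ ∀ m ∈ t, u.2 m = p.2)
    ((α.map Prod.fst).splitLengths l) α

theorem fits_iff_fitsOn {u : Wreath n G} {α : List (ℕ × G)} (hα : IsGComp n α) :
    Fits u α ↔ FitsOn u α (List.finRange n) := by
  rw [Fits, ← List.forall₂_splitLengths_iff (by simp [wordOf, hα.2]), wordOf,
    List.splitLengths_map, List.forall₂_map_left_iff, FitsOn]
  have hsorted : ∀ t : List (Fin n),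
      (t.map (Prod.fst ∘ fun i => ((u.1 i : ℕ), u.2 i))).IsChain (· < ·) ↔
        (t.map u.1).Pairwise (· < ·) := fun t => by
    rw [← List.isChain_map_val_iff_pairwise, List.map_map]
    rfl
  simp only [List.map_map, List.forall_mem_map]
  exact ⟨fun h => h.imp fun t _ htp => ⟨(hsorted t).1 htp.1, htp.2⟩,
    fun h => h.imp fun t _ htp => ⟨(hsorted t).2 htp.1, htp.2⟩⟩

theorem exists_fitsOn_finRange {α : List (ℕ × G)} (hα : IsGComp n α)
    {ss : List (List (Fin n))} (hlen : ss.map List.length = α.map Prod.fst)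
    (hsorted : ∀ s ∈ ss, s.Pairwise (· < ·)) (hnd : ss.flatten.Nodup) :
    ∃ u : Wreath n G, FitsOn u α (List.finRange n) ∧ (List.finRange n).map u.1 = ss.flatten := by
  set colors := α.map fun p => List.replicate p.1 p.2
  have hcolors : colors.map List.length = α.map Prod.fst := by simp [colors]
  obtain ⟨τ, hτ⟩ := List.exists_perm_map_finRange_eq hnd (by rw [List.length_flatten, hlen, hα.2])
  obtain ⟨g, hg⟩ := List.exists_map_finRange_eq colors.flatten
    (by rw [List.length_flatten, hcolors, hα.2])
  refine ⟨(τ, g), ?_, hτ⟩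
  have hτ' : ((α.map Prod.fst).splitLengths (List.finRange n)).map (List.map τ) = ss := by
    rw [← List.splitLengths_map, hτ, ← hlen, List.splitLengths_map_length_flatten]
  have hg' : ((α.map Prod.fst).splitLengths (List.finRange n)).map (List.map g) = colors := by
    rw [← List.splitLengths_map, hg, ← hcolors, List.splitLengths_map_length_flatten]
  unfold FitsOn
  rw [List.forall₂_and_left]
  refine ⟨fun t ht => hsorted _ (hτ' ▸ List.mem_map_of_mem ht), ?_⟩
  refine (List.map_eq_map_iff_forall₂.1 hg').imp fun t p htp m hm => ?_
  exact (List.eq_replicate_iff.1 htp).2 _ (List.mem_map_of_mem hm)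

end Blocks

section Mul

variable {n : ℕ} {G : Type*} [Mul G]

theorem mulOGP_cons (p : Finset (Fin n) × G) (P Q : OGP n G) :
    mulOGP (p :: P) Q = mulOGP [p] Q ++ mulOGP P Q := by
  simp [mulOGP]

theorem mulOGP_singleton_iota (w : Wreath n G) {B : Finset (Fin n)} {t : List (Fin n)}
    (ht : t.Pairwise (· < ·)) (hB : ∀ i, w.1 i ∈ B ↔ i ∈ t) (g : G) :
    mulOGP [(B, g)] (iota w) = t.map fun i => ({w.1 i}, w.2 i * g) := by
  have hstep : ∀ i, (if (B ∩ {w.1 i}).Nonempty then some (B ∩ {w.1 i}, w.2 i * g) else none) =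
      if i ∈ t then some (({w.1 i} : Finset (Fin n)), w.2 i * g) else none := by
    intro i
    by_cases hi : i ∈ t
    · simp [hi, Finset.inter_singleton_of_mem ((hB i).2 hi)]
    · simp [hi, Finset.inter_singleton_of_notMem (mt (hB i).1 hi)]
  simp only [mulOGP, List.flatMap_cons, List.flatMap_nil, List.append_nil, iota,
    List.filterMap_map, Function.comp_def, hstep]
  rw [List.filterMap_ite_eq_map_filter, List.filter_mem_finRange_eq ht]

end Mul

section Group

variable {n : ℕ} {G : Type*} [Group G]

theorem mulOGP_blocksOf_iota (w u : Wreath n G) {α : List (ℕ × G)} {l : List (Fin n)}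
    (h : FitsOn u α l) :
    mulOGP (blocksOf α (l.map (w * u).1)) (iota w) =
      (l.take (α.map Prod.fst).sum).map fun m => ({(w * u).1 m}, (w * u).2 m) := by
  induction α generalizing l with
  | nil => simp [mulOGP]
  | cons p α ih =>
    rw [FitsOn, List.map_cons, List.splitLengths_cons] at h
    obtain _ | ⟨⟨hsorted, hcolor⟩, htail⟩ := h
    have hB : ∀ i, w.1 i ∈ ((l.take p.1).map (w * u).1).toFinset ↔ i ∈ (l.take p.1).map u.1 := by
      intro i
      rw [List.mem_toFinset, show (w * u).1 = w.1 ∘ u.1 from rfl, ← List.map_map,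
        List.mem_map_of_injective w.1.injective]
    rw [blocksOf_cons, mulOGP_cons, ← List.map_take, ← List.map_drop,
      mulOGP_singleton_iota w hsorted hB, ih htail, List.map_cons, List.sum_cons, List.take_add,
      List.map_append, List.map_map]
    congr 1
    exact List.map_congr_left fun m hm => by rw [← hcolor m hm]; rfl

theorem Fits.blocksOf_mul_iota {u : Wreath n G} {α : List (ℕ × G)} (hα : IsGComp n α)
    (h : Fits u α) (w : Wreath n G) :
    blocksOf α ((List.finRange n).map (w * u).1) * iota w = iota (w * u) := by
  refine (mulOGP_blocksOf_iota w u ((fits_iff_fitsOn hα).1 h)).trans ?_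
  rw [hα.2, List.take_of_length_le (by simp), iota]

theorem exists_fits_blocksOf_eq (v : Wreath n G) {α : List (ℕ × G)} (hα : IsGComp n α)
    {P : OGP n G} (hP : IsOGP P) (htype : typeOGP P = α) :
    ∃ u : Wreath n G, Fits u α ∧ blocksOf α ((List.finRange n).map (v * u).1) = P := by
  set ss := P.map fun p => (p.1.image v.1.symm).sort (· ≤ ·)
  have hlen : ss.map List.length = α.map Prod.fst := by
    simp [ss, ← htype, typeOGP, Finset.card_image_of_injective _ v.1.symm.injective]
  have hnd : ss.flatten.Nodup := by
    refine List.nodup_flatten.2 ⟨?_, ?_⟩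
    · simp only [ss, List.mem_map]
      rintro _ ⟨p, -, rfl⟩
      exact Finset.sort_nodup _ _
    · refine List.pairwise_map.2 (hP.2.1.imp fun hpq x hx hx' => ?_)
      rw [Finset.mem_sort] at hx hx'
      exact Finset.disjoint_left.1 ((Finset.disjoint_image v.1.symm.injective).2 hpq) hx hx'
  have hsorted : ∀ s ∈ ss, s.Pairwise (· < ·) := by
    simp only [ss, List.mem_map]
    rintro _ ⟨p, -, rfl⟩
    exact (Finset.sortedLT_sort _).pairwise
  obtain ⟨u, hfits, hu⟩ := exists_fitsOn_finRange hα hlen hsorted hnd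
  refine ⟨u, (fits_iff_fitsOn hα).2 hfits, ?_⟩
  have hmap : (List.finRange n).map (v * u).1 = (ss.map (List.map v.1)).flatten := by
    rw [show (v * u).1 = v.1 ∘ u.1 from rfl, ← List.map_map, hu, List.map_flatten]
  rw [hmap, blocksOf_flatten (by simpa [Function.comp_def] using hlen), ← htype, typeOGP,
    List.map_map, List.zipWith_map, List.zipWith_self]
  refine (List.map_congr_left fun p _ => ?_).trans (List.map_id P)
  refine Prod.ext (Finset.ext fun i => ?_) rfl
  simp

theorem bijOn_blocksOf (v : Wreath n G) {α : List (ℕ × G)} (hα : IsGComp n α) :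
    Set.BijOn (fun u : Wreath n G => blocksOf α ((List.finRange n).map (v * u).1))
      {u | Fits u α} {P | IsOGP P ∧ typeOGP P = α} := by
  have hl : ∀ u : Wreath n G, ((List.finRange n).map (v * u).1).Nodup := fun u =>
    (List.nodup_finRange n).map (v * u).1.injective
  refine ⟨fun u _ => ⟨isOGP_blocksOf hα (hl u) (by simp),
    typeOGP_blocksOf (hl u) (by simp [hα.2])⟩, fun u hu u' hu' h => ?_, fun P hP => ?_⟩
  · refine mul_left_cancel (a := v) (iota_injective ?_)
    rw [← Fits.blocksOf_mul_iota hα hu, ← Fits.blocksOf_mul_iota hα hu']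
    exact congrArg (· * iota v) h
  · obtain ⟨u, hu, rfl⟩ := exists_fits_blocksOf_eq v hα hP.1 hP.2
    exact ⟨u, hu, rfl⟩

open MonoidAlgebra in
theorem sigmaA_mul_single_iota [Finite G] {α : List (ℕ × G)} (hα : IsGComp n α)
    (v : Wreath n G) :
    sigmaA (n := n) α * single (iota v) (1 : ℤ) = mapDomain iota (single v 1 * Xw (n := n) α) := by
  have : Finite (Wreath n G) := inferInstanceAs (Finite (Equiv.Perm (Fin n) × (Fin n → G)))
  have hfin := Set.toFinite {u : Wreath n G | Fits u α}
  calc sigmaA (n := n) α * single (iota v) (1 : ℤ)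
      = ∑ u ∈ hfin.toFinset, single (blocksOf α ((List.finRange n).map (v * u).1) * iota v) 1 := by
        rw [sigmaA, ← finsum_mem_eq_of_bijOn _ (bijOn_blocksOf v hα) (fun _ _ => rfl),
          finsum_mem_eq_finite_toFinset_sum _ hfin, Finset.sum_mul]
        simp only [single_mul_single, one_mul]
    _ = ∑ u ∈ hfin.toFinset, mapDomain iota (single v 1 * single u 1) := by
        refine Finset.sum_congr rfl fun u hu => ?_
        rw [Fits.blocksOf_mul_iota hα (hfin.mem_toFinset.1 hu), single_mul_single, one_mul,
          mapDomain_single]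
    _ = mapDomain iota (single v 1 * Xw (n := n) α) := by
        rw [Xw, finsum_mem_eq_finite_toFinset_sum _ hfin, Finset.mul_sum]
        exact (map_sum (mapDomainLinearMap ℤ ℤ iota) _ _).symm

end Group

/-- under the identification `ι` of the singleton-block ordered
`G`-partitions with `G ≀ S_n`, left multiplication by `σ_α` satisfies
`σ_α · v = v * (σ_α · I)` for every `v ∈ G ≀ S_n`; in particular `σ_α · I = X_α`. -/
theorem sigmaA_action_eq_right_mul {n : ℕ} {G : Type*} [Group G] [Fintype G]
    (α : List (ℕ × G)) (hα : IsGComp n α) :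
    (∀ v : Wreath n G,
        sigmaA (n := n) α * MonoidAlgebra.single (iota v) (1 : ℤ) =
          MonoidAlgebra.mapDomain iota (MonoidAlgebra.single v (1 : ℤ) * Xw (n := n) α)) ∧
      sigmaA (n := n) α * MonoidAlgebra.single (iota (1 : Wreath n G)) (1 : ℤ) =
        MonoidAlgebra.mapDomain iota (Xw (n := n) α) := by
  refine ⟨sigmaA_mul_single_iota hα, ?_⟩
  rw [sigmaA_mul_single_iota hα 1, ← MonoidAlgebra.one_def, one_mul]
end
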